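/- arXiv:1605.08905 — 6 statements merged into one kernel-verified Lean document; each statement's English description precedes it below -/
import Mathlib

section
/- Let k ≥ 2. An oriented graph G with directed girth at least k+1 satisfies χ_{k-dip}(G) = |V(G)| if and only if G has weak diameter at most k. -/
/-!
A colouring is a `k`-dipath colouring exactly when it separates every pair of distinct vertices
at weak distance at most `k`, since a shortest directed walk between two vertices is a directed
path. Hence, when the weak diameter is at most `k`, every `k`-dipath colouring is injective;
and if some pair `x ≠ y` is at weak distance more than `k`, giving `y` the colour of `x` in an
otherwise injective colouring uses only `|V| - 1` colours.
-/

/-- A directed walk of length `n` in the digraph with arc relation `A`,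
given as a function `p : ℕ → V` (only indices `0..n` matter). -/
def IsDiwalk {V : Type*} (A : V → V → Prop) (n : ℕ) (p : ℕ → V) : Prop :=
  ∀ i < n, A (p i) (p (i+1))

/-- A directed path of length `n`: a directed walk whose vertices `p 0, …, p n`
are pairwise distinct. -/
def IsDipath {V : Type*} (A : V → V → Prop) (n : ℕ) (p : ℕ → V) : Prop :=
  IsDiwalk A n p ∧ ∀ i ≤ n, ∀ j ≤ n, p i = p j → i = j

/-- A directed cycle of length `n`: a directed walk with `p 0 = p n` whose
vertices `p 0, …, p (n-1)` are pairwise distinct. -/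
def IsDicycle {V : Type*} (A : V → V → Prop) (n : ℕ) (p : ℕ → V) : Prop :=
  IsDiwalk A n p ∧ p 0 = p n ∧ ∀ i < n, ∀ j < n, p i = p j → i = j

/-- A digraph is acyclic if it has no directed cycle of positive length. -/
def Acyclic {V : Type*} (A : V → V → Prop) : Prop :=
  ∀ n, 0 < n → ∀ p : ℕ → V, ¬ IsDicycle A n p

/-- Directed girth at least `g`: no directed cycle of length less than `g`. -/
def GirthAtLeast {V : Type*} (A : V → V → Prop) (g : ℕ) : Prop :=
  ∀ n, 0 < n → n < g → ∀ p : ℕ → V, ¬ IsDicycle A n p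

/-- An oriented graph: a loopless digraph with no digons. -/
def Oriented {V : Type*} (A : V → V → Prop) : Prop :=
  (∀ x, ¬ A x x) ∧ ∀ x y, A x y → ¬ A y x

/-- A `k`-dipath `t`-colouring: vertices joined by a directed path of length
at most `k` (and at least 1) receive different colours. -/
def IsDipathColoring {V : Type*} (A : V → V → Prop) (k : ℕ) {t : ℕ} (c : V → Fin t) : Prop :=
  ∀ ℓ, 0 < ℓ → ℓ ≤ k → ∀ p : ℕ → V, IsDipath A ℓ p → c (p 0) ≠ c (p ℓ)

/-- The `k`-dipath chromatic number. -/
noncomputable def dipChrom {V : Type*} (A : V → V → Prop) (k : ℕ) : ℕ :=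
  sInf {t | ∃ c : V → Fin t, IsDipathColoring A k c}

/-- A homomorphism of digraphs. -/
def DiHom {V W : Type*} (A : V → V → Prop) (B : W → W → Prop) (φ : V → W) : Prop :=
  ∀ x y, A x y → B (φ x) (φ y)

/-- The transitive tournament on `t` vertices. -/
def transTour (t : ℕ) : Fin t → Fin t → Prop := fun i j => i < j

/-- The oriented chromatic number: the least `t` such that there is a
homomorphism to some oriented graph on `t` vertices. -/
noncomputable def oChrom {V : Type*} (A : V → V → Prop) : ℕ :=
  sInf {t | ∃ B : Fin t → Fin t → Prop, Oriented B ∧ ∃ φ : V → Fin t, DiHom A B φ}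

/-- Weak distance at most `k`: a directed walk of length at most `k`
from `x` to `y` or from `y` to `x`. -/
def WeakDistLE {V : Type*} (A : V → V → Prop) (k : ℕ) (x y : V) : Prop :=
  ∃ ℓ ≤ k, ∃ p : ℕ → V, IsDiwalk A ℓ p ∧ ((p 0 = x ∧ p ℓ = y) ∨ (p 0 = y ∧ p ℓ = x))

/-- The directed cycle of length `m`. -/
def dicycleRel (m : ℕ) : Fin m → Fin m → Prop := fun i j => j.val = (i.val + 1) % m

/-- The directed path on `m+1` vertices (length `m`). -/
def dipathRel (m : ℕ) : Fin (m+1) → Fin (m+1) → Prop := fun i j => i.val + 1 = j.val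

section Walks

variable {V : Type*} {A : V → V → Prop}

lemma IsDiwalk.exists_shorter_of_eq {ℓ i j : ℕ} {p : ℕ → V} (hp : IsDiwalk A ℓ p)
    (hij : i < j) (hj : j ≤ ℓ) (heq : p i = p j) :
    ∃ ℓ' < ℓ, ∃ q : ℕ → V, IsDiwalk A ℓ' q ∧ q 0 = p 0 ∧ q ℓ' = p ℓ := by
  refine ⟨ℓ - (j - i), by omega, fun m => if m ≤ i then p m else p (m + (j - i)), ?_, by simp, ?_⟩
  · intro m hm
    by_cases hmi : m + 1 ≤ i
    · simpa only [if_pos (by omega : m ≤ i), if_pos hmi] using hp m (by omega)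
    · by_cases hm_eq : m = i
      · subst hm_eq
        simp only [le_refl, if_true, if_neg hmi, heq, show m + 1 + (j - m) = j + 1 by omega]
        exact hp j (by omega)
      · simp only [if_neg (show ¬m ≤ i by omega), if_neg hmi,
          show m + 1 + (j - i) = m + (j - i) + 1 by omega]
        exact hp _ (by omega)
  · by_cases h : ℓ - (j - i) ≤ i
    · obtain rfl : j = ℓ := by omega
      simp only [show j - (j - i) = i by omega, le_refl, if_true, heq]
    · simp only [if_neg h, show ℓ - (j - i) + (j - i) = ℓ by omega]

lemma IsDiwalk.exists_isDipath {ℓ : ℕ} {p : ℕ → V} (hp : IsDiwalk A ℓ p) :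
    ∃ ℓ' ≤ ℓ, ∃ q : ℕ → V, IsDipath A ℓ' q ∧ q 0 = p 0 ∧ q ℓ' = p ℓ := by
  induction ℓ using Nat.strong_induction_on generalizing p with
  | _ ℓ ih =>
    by_cases hinj : ∀ i ≤ ℓ, ∀ j ≤ ℓ, p i = p j → i = j
    · exact ⟨ℓ, le_rfl, p, ⟨hp, hinj⟩, rfl, rfl⟩
    push Not at hinj
    obtain ⟨i, hi, j, hj, heq, hne⟩ := hinj
    have hshorter : ∃ ℓ' < ℓ, ∃ q : ℕ → V, IsDiwalk A ℓ' q ∧ q 0 = p 0 ∧ q ℓ' = p ℓ := by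
      rcases hne.lt_or_gt with hij | hji
      · exact hp.exists_shorter_of_eq hij hj heq
      · exact hp.exists_shorter_of_eq hji hi heq.symm
    obtain ⟨ℓ', hℓ', q, hq, hq0, hqℓ⟩ := hshorter
    obtain ⟨ℓ'', hℓ'', r, hr, hr0, hrℓ⟩ := ih ℓ' hℓ' hq
    exact ⟨ℓ'', by omega, r, hr, hr0.trans hq0, hrℓ.trans hqℓ⟩

lemma IsDipath.ends_ne {ℓ : ℕ} {p : ℕ → V} (hp : IsDipath A ℓ p) (hℓ : 0 < ℓ) : p 0 ≠ p ℓ :=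
  fun h => hℓ.ne (hp.2 0 ℓ.zero_le ℓ le_rfl h)

lemma WeakDistLE.symm {k : ℕ} {x y : V} (h : WeakDistLE A k x y) : WeakDistLE A k y x := by
  obtain ⟨ℓ, hℓ, p, hp, hends⟩ := h
  exact ⟨ℓ, hℓ, p, hp, hends.symm⟩

end Walks

section Colourings

variable {V : Type*} {A : V → V → Prop} {k : ℕ}

lemma isDipathColoring_iff {t : ℕ} (c : V → Fin t) :
    IsDipathColoring A k c ↔ ∀ x y, x ≠ y → WeakDistLE A k x y → c x ≠ c y := by
  constructor
  · rintro hc x y hxy ⟨ℓ, hℓk, p, hp, hends⟩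
    obtain ⟨ℓ', hℓ', q, hq, hq0, hqℓ⟩ := hp.exists_isDipath
    have hℓ'_pos : 0 < ℓ' := by
      refine Nat.pos_of_ne_zero fun h0 => hxy ?_
      subst h0
      rcases hends with ⟨rfl, rfl⟩ | ⟨rfl, rfl⟩ <;> rw [← hq0, ← hqℓ]
    have hsep := hc ℓ' hℓ'_pos (hℓ'.trans hℓk) q hq
    rw [hq0, hqℓ] at hsep
    rcases hends with ⟨rfl, rfl⟩ | ⟨rfl, rfl⟩
    exacts [hsep, hsep.symm]
  · intro hc ℓ hℓ hℓk p hp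
    exact hc _ _ (hp.ends_ne hℓ) ⟨ℓ, hℓk, p, hp.1, Or.inl ⟨rfl, rfl⟩⟩

lemma isDipathColoring_of_injective {t : ℕ} {c : V → Fin t} (hc : Function.Injective c) :
    IsDipathColoring A k c :=
  (isDipathColoring_iff c).2 fun _ _ hxy _ => hc.ne hxy

variable [Fintype V]

lemma dipChrom_le_card : dipChrom A k ≤ Fintype.card V :=
  Nat.sInf_le ⟨Fintype.equivFin V, isDipathColoring_of_injective (Fintype.equivFin V).injective⟩

lemma card_le_dipChrom (h : ∀ x y : V, x ≠ y → WeakDistLE A k x y) :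
    Fintype.card V ≤ dipChrom A k := by
  refine le_csInf ⟨_, Fintype.equivFin V,
    isDipathColoring_of_injective (Fintype.equivFin V).injective⟩ ?_
  rintro t ⟨c, hc⟩
  have hinj : Function.Injective c := fun x y hcxy => by
    by_contra hxy
    exact (isDipathColoring_iff c).1 hc x y hxy (h x y hxy) hcxy
  simpa using Fintype.card_le_of_injective c hinj

lemma dipChrom_lt_card {x y : V} (hxy : x ≠ y) (hw : ¬WeakDistLE A k x y) :
    dipChrom A k < Fintype.card V := by
  classical
  have hcard : Fintype.card {v : V // v ≠ y} = Fintype.card V - 1 := by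
    simp [Fintype.card_subtype_compl]
  let e := Fintype.equivFinOfCardEq hcard
  let merge : V → {v : V // v ≠ y} := fun v => ⟨if v = y then x else v, by split_ifs <;> assumption⟩
  have hc : IsDipathColoring A k (e ∘ merge) := by
    refine (isDipathColoring_iff _).2 fun u v huv huvw hcuv => ?_
    have hmerge : (if u = y then x else u) = if v = y then x else v :=
      congrArg Subtype.val (e.injective hcuv)
    split_ifs at hmerge with hu hv hv
    · exact huv (hu.trans hv.symm)
    · exact hw (hu ▸ hmerge ▸ huvw.symm)
    · exact hw (hv ▸ hmerge ▸ huvw)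
    · exact huv hmerge
  have hle : dipChrom A k ≤ Fintype.card V - 1 := Nat.sInf_le ⟨_, hc⟩
  have hpos : 0 < Fintype.card V := Fintype.card_pos_iff.2 ⟨x⟩
  omega

end Colourings

theorem stmt3_general {V : Type*} [Fintype V] (A : V → V → Prop) (k : ℕ) :
    dipChrom A k = Fintype.card V ↔ ∀ x y : V, x ≠ y → WeakDistLE A k x y := by
  constructor
  · intro h x y hxy
    by_contra hw
    exact (dipChrom_lt_card hxy hw).ne h
  · intro h
    exact dipChrom_le_card.antisymm (card_le_dipChrom h)

/-- for `k ≥ 2`, an oriented graph with directed girth at least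
`k+1` is a `k`-dipath clique (χ_{k-dip} = |V|) iff it has weak diameter at most `k`. -/
theorem stmt3 {V : Type*} [Fintype V] (A : V → V → Prop) (k : ℕ) (hk : 2 ≤ k)
    (hor : Oriented A) (hg : GirthAtLeast A (k + 1)) :
    dipChrom A k = Fintype.card V ↔ ∀ x y : V, x ≠ y → WeakDistLE A k x y :=
  stmt3_general A k
end

section
/- If there is a homomorphism φ : G → H of digraphs and W is a directed walk of length ℓ ≤ k in G, and H has directed girth at least k+1, then the image of W under φ is a directed path in H (in particular, all vertices of φ(W) are distinct). -/
/- If two vertices of the image walk coincide, the segment between them is a closed walk in `B` of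
positive length at most `k`. Shortcutting at a repeated vertex shows that every closed walk of
positive length contains a directed cycle no longer than itself, which the girth of `B` forbids. -/

theorem DiHom.isDiwalk_comp {V W : Type*} {A : V → V → Prop} {B : W → W → Prop} {φ : V → W}
    (hφ : DiHom A B φ) {n : ℕ} {p : ℕ → V} (hw : IsDiwalk A n p) : IsDiwalk B n (φ ∘ p) :=
  fun i hi => hφ _ _ (hw i hi)

section

variable {V : Type*} {A : V → V → Prop}

theorem IsDiwalk.shift {n : ℕ} {p : ℕ → V} (hw : IsDiwalk A n p) {a m : ℕ} (h : a + m ≤ n) :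
    IsDiwalk A m (fun t => p (a + t)) :=
  fun t ht => hw (a + t) (by omega)

theorem IsDiwalk.exists_isDicycle_of_closed {n : ℕ} {p : ℕ → V} (hw : IsDiwalk A n p)
    (hn : 0 < n) (hclosed : p 0 = p n) : ∃ m, 0 < m ∧ m ≤ n ∧ ∃ r : ℕ → V, IsDicycle A m r := by
  induction n using Nat.strong_induction_on generalizing p with
  | _ n ih =>
    by_cases hinj : ∀ i < n, ∀ j < n, p i = p j → i = j
    · exact ⟨n, hn, le_rfl, p, hw, hclosed, hinj⟩
    push Not at hinj
    obtain ⟨i, hi, j, hj, hij, hne⟩ := hinj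
    wlog hlt : i < j generalizing i j
    · exact this j hj i hi hij.symm hne.symm (by omega)
    have hseg : p (i + 0) = p (i + (j - i)) := by
      rw [Nat.add_zero, Nat.add_sub_cancel' hlt.le, hij]
    obtain ⟨m, hm, hmle, hcycle⟩ :=
      ih (j - i) (by omega) (hw.shift (a := i) (by omega)) (by omega) hseg
    exact ⟨m, hm, by omega, hcycle⟩

theorem GirthAtLeast.isDipath_of_isDiwalk {g ℓ : ℕ} (hg : GirthAtLeast A g) (hℓ : ℓ < g)
    {p : ℕ → V} (hw : IsDiwalk A ℓ p) : IsDipath A ℓ p := by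
  refine ⟨hw, fun i hi j hj hij => ?_⟩
  by_contra hne
  wlog hlt : i < j generalizing i j
  · exact this j hj i hi hij.symm (Ne.symm hne) (by omega)
  have hseg : p (i + 0) = p (i + (j - i)) := by
    rw [Nat.add_zero, Nat.add_sub_cancel' hlt.le, hij]
  obtain ⟨m, hm, hmle, r, hr⟩ :=
    (hw.shift (a := i) (m := j - i) (by omega)).exists_isDicycle_of_closed (by omega) hseg
  exact hg m hm (by omega) r hr

end

/-- the image under a homomorphism of a directed walk of length
`ℓ ≤ k` is a directed path, provided the target has directed girth ≥ `k+1`. -/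
theorem stmt6 {V W : Type*} (A : V → V → Prop) (B : W → W → Prop)
    (φ : V → W) (hφ : DiHom A B φ) (k ℓ : ℕ) (hℓ : ℓ ≤ k)
    (hg : GirthAtLeast B (k + 1)) (p : ℕ → V) (hw : IsDiwalk A ℓ p) :
    IsDipath B ℓ (φ ∘ p) :=
  hg.isDipath_of_isDiwalk (Nat.lt_succ_of_le hℓ) (hφ.isDiwalk_comp hw)
end

section
/- Every vertex colouring of a digraph obtained by composing a homomorphism φ : G → H with a k-dipath colouring c of H, where H has directed girth at least k+1, is a k-dipath colouring of G. -/
/-! A `φ`-image of a directed path of length `ℓ ≤ k` is a directed walk of length `ℓ` in `H`;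
if it repeated a vertex, its shortest closed segment would be a directed cycle of length
at most `ℓ ≤ k`, which the girth forbids. So the image is a directed path of `H`, and `c`
separates its ends. -/

section Diwalk

variable {V : Type*} {A : V → V → Prop} {n : ℕ} {p : ℕ → V}

theorem IsDiwalk.map {W : Type*} {B : W → W → Prop} {φ : V → W} (hφ : DiHom A B φ)
    (hp : IsDiwalk A n p) : IsDiwalk B n (φ ∘ p) :=
  fun i hi => hφ _ _ (hp i hi)

theorem IsDiwalk.shift_s7 (hp : IsDiwalk A n p) {i m : ℕ} (him : i + m ≤ n) :
    IsDiwalk A m (fun s => p (i + s)) :=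
  fun s hs => by simpa only [Nat.add_assoc] using hp (i + s) (by omega)

theorem IsDiwalk.exists_isDicycle_of_eq (hp : IsDiwalk A n p) {i j : ℕ} (hij : i < j)
    (hj : j ≤ n) (h : p i = p j) : ∃ m, 0 < m ∧ m ≤ j - i ∧ ∃ q, IsDicycle A m q := by
  induction hd : j - i using Nat.strong_induction_on generalizing i j with
  | _ d ih =>
    by_cases hinj : ∀ s < d, ∀ s' < d, p (i + s) = p (i + s') → s = s'
    · refine ⟨d, by omega, le_rfl, fun s => p (i + s), hp.shift_s7 (by omega), ?_, hinj⟩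
      simpa [← hd, Nat.add_sub_cancel' hij.le] using h
    · push Not at hinj
      obtain ⟨s, hs, s', hs', heq, hne⟩ := hinj
      obtain ⟨a, b, hab, hb, hpab⟩ : ∃ a b, a < b ∧ b < d ∧ p (i + a) = p (i + b) := by
        rcases lt_or_gt_of_ne hne with h | h
        exacts [⟨s, s', h, hs', heq⟩, ⟨s', s, h, hs, heq.symm⟩]
      obtain ⟨m, hm, hmd, q, hq⟩ :=
        ih (b - a) (by omega) (i := i + a) (j := i + b) (by omega) (by omega) hpab (by omega)
      exact ⟨m, hm, by omega, q, hq⟩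

theorem IsDiwalk.isDipath_of_girthAtLeast {g : ℕ} (hg : GirthAtLeast A g) (hn : n < g)
    (hp : IsDiwalk A n p) : IsDipath A n p := by
  have hne : ∀ i j, i < j → j ≤ n → p i ≠ p j := fun i j hij hj heq => by
    obtain ⟨m, hm, hmd, q, hq⟩ := hp.exists_isDicycle_of_eq hij hj heq
    exact hg m hm (by omega) q hq
  refine ⟨hp, fun i hi j hj heq => ?_⟩
  by_contra h
  rcases lt_or_gt_of_ne h with h | h
  exacts [hne i j h hj heq, hne j i h hi heq.symm]

end Diwalk

/-- composing a homomorphism `φ : G → H` with a `k`-dipath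
colouring of `H` (where `H` has directed girth ≥ `k+1`) yields a `k`-dipath
colouring of `G`. -/
theorem stmt7 {V W : Type*} (A : V → V → Prop) (B : W → W → Prop)
    (φ : V → W) (hφ : DiHom A B φ) (k t : ℕ)
    (hg : GirthAtLeast B (k + 1)) (c : W → Fin t)
    (hc : IsDipathColoring B k c) :
    IsDipathColoring A k (c ∘ φ) := by
  intro ℓ hℓ hℓk p hp
  exact hc ℓ hℓ hℓk (φ ∘ p) ((hp.1.map hφ).isDipath_of_girthAtLeast hg (by omega))
end

section
/- If G is an oriented graph and T is the oriented graph on 5 vertices consisting of a directed 3-cycle together with a universal source and a universal sink, then every oriented graph with 2-dipath chromatic number at most 3 admits a homomorphism to T; consequently χ_o(G) ≤ 5 whenever χ_{2-dip}(G) ≤ 3. -/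
/-- The tournament on 5 vertices: a directed 3-cycle `1 → 2 → 3 → 1`
together with a universal source `0` and a universal sink `4`. -/
def T5 : Fin 5 → Fin 5 → Prop := fun i j =>
  (i = 0 ∧ j ≠ 0) ∨ (j = 4 ∧ i ≠ 0 ∧ i ≠ 4) ∨
  (i = 1 ∧ j = 2) ∨ (i = 2 ∧ j = 3) ∨ (i = 3 ∧ j = 1)

/-!
In a 2-dipath 3-colouring `c`, if `u → x` then all out-neighbours of `x` get the third colour,
the one different from `c u` and `c x`. Sources go to the universal source of `T5`, the other
vertices without out-neighbours to the universal sink, and each remaining vertex `x` to a vertex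
of the 3-cycle determined by `c x` and the common colour of its out-neighbours. Along an arc
`x → y` between such vertices the pair `(c x, c y)` becomes `(c y, t)` with `t` the third colour,
and the pairs are labelled so that this step is always an arc of the 3-cycle.
-/

section DipathColoring

variable {V : Type*} {A : V → V → Prop} {k : ℕ} {t : ℕ} {c : V → Fin t}

theorem IsDipathColoring.ne_of_adj (hA : ∀ x, ¬ A x x) (hc : IsDipathColoring A k c)
    (hk : 1 ≤ k) {x y : V} (hxy : A x y) : c x ≠ c y := by
  have hne : x ≠ y := fun h => hA y (h ▸ hxy)
  have hp : IsDipath A 1 (fun i => if i = 0 then x else y) := by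
    refine ⟨fun i hi => ?_, fun i hi j hj hij => ?_⟩
    · interval_cases i; simpa using hxy
    · interval_cases i <;> interval_cases j <;> simp_all
  simpa using hc 1 one_pos hk _ hp

theorem IsDipathColoring.ne_of_adj_adj (hA : Oriented A) (hc : IsDipathColoring A k c)
    (hk : 2 ≤ k) {u x y : V} (hux : A u x) (hxy : A x y) : c u ≠ c y := by
  have hne_ux : u ≠ x := fun h => hA.1 x (h ▸ hux)
  have hne_xy : x ≠ y := fun h => hA.1 y (h ▸ hxy)
  have hne_uy : u ≠ y := fun h => hA.2 x y hxy (h ▸ hux)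
  have hp : IsDipath A 2 (fun i => if i = 0 then u else if i = 1 then x else y) := by
    refine ⟨fun i hi => ?_, fun i hi j hj hij => ?_⟩
    · interval_cases i <;> simpa
    · interval_cases i <;> interval_cases j <;> simp_all
  simpa using hc 2 two_pos hk _ hp

theorem Fin.three_eq_of_ne_of_ne {a b v w : Fin 3} (hab : a ≠ b) (hva : v ≠ a) (hvb : v ≠ b)
    (hwa : w ≠ a) (hwb : w ≠ b) : v = w := by
  revert a b v w; decide

theorem IsDipathColoring.eq_of_adj_adj (hA : Oriented A) {c : V → Fin 3}
    (hc : IsDipathColoring A 2 c) {u x y y' : V} (hux : A u x) (hxy : A x y) (hxy' : A x y') :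
    c y = c y' :=
  Fin.three_eq_of_ne_of_ne (hc.ne_of_adj hA.1 one_le_two hux)
    (hc.ne_of_adj_adj hA le_rfl hux hxy).symm (hc.ne_of_adj hA.1 one_le_two hxy).symm
    (hc.ne_of_adj_adj hA le_rfl hux hxy').symm (hc.ne_of_adj hA.1 one_le_two hxy').symm

end DipathColoring

theorem oriented_T5 : Oriented T5 := by
  unfold Oriented T5; decide

theorem T5_zero_left {j : Fin 5} (hj : j ≠ 0) : T5 0 j := Or.inl ⟨rfl, hj⟩

theorem T5_four_right {i : Fin 5} (hi0 : i ≠ 0) (hi4 : i ≠ 4) : T5 i 4 :=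
  Or.inr (Or.inl ⟨rfl, hi0, hi4⟩)

/-- The vertex of the 3-cycle `1 → 2 → 3 → 1` of `T5` receiving a vertex of colour `a`
whose out-neighbours have colour `b`. -/
def t5CycleVertex (a b : Fin 3) : Fin 5 :=
  if a = 0 then 1 else if b = 0 then 3 else 2

theorem t5CycleVertex_ne_zero (a b : Fin 3) : t5CycleVertex a b ≠ 0 := by
  revert a b; decide

theorem t5CycleVertex_ne_four (a b : Fin 3) : t5CycleVertex a b ≠ 4 := by
  revert a b; decide

theorem T5_t5CycleVertex {a b t : Fin 3} (hab : a ≠ b) (hta : t ≠ a) (htb : t ≠ b) :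
    T5 (t5CycleVertex a b) (t5CycleVertex b t) := by
  revert a b t; unfold T5 t5CycleVertex; decide

section ToT5

variable {V : Type*} {A : V → V → Prop} {c : V → Fin 3}

open Classical in
noncomputable def toT5 (A : V → V → Prop) (c : V → Fin 3) (x : V) : Fin 5 :=
  if ∃ u, A u x then
    if h : ∃ y, A x y then t5CycleVertex (c x) (c h.choose) else 4
  else 0

theorem toT5_of_not_adj {x : V} (hx : ¬∃ u, A u x) : toT5 A c x = 0 := by
  simp only [toT5, if_neg hx]

theorem toT5_of_adj_of_not_adj {u x : V} (hux : A u x) (hx : ¬∃ y, A x y) :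
    toT5 A c x = 4 := by
  have hin : ∃ u, A u x := ⟨u, hux⟩
  simp only [toT5, if_pos hin, dif_neg hx]

theorem toT5_of_adj_adj (hA : Oriented A) (hc : IsDipathColoring A 2 c) {u x y : V}
    (hux : A u x) (hxy : A x y) : toT5 A c x = t5CycleVertex (c x) (c y) := by
  have hin : ∃ u, A u x := ⟨u, hux⟩
  have hout : ∃ y, A x y := ⟨y, hxy⟩
  simp only [toT5, if_pos hin, dif_pos hout,
    hc.eq_of_adj_adj hA hux hout.choose_spec hxy]

theorem toT5_ne_zero (hA : Oriented A) (hc : IsDipathColoring A 2 c) {u x : V} (hux : A u x) :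
    toT5 A c x ≠ 0 := by
  by_cases hout : ∃ y, A x y
  · obtain ⟨y, hxy⟩ := hout
    rw [toT5_of_adj_adj hA hc hux hxy]; exact t5CycleVertex_ne_zero _ _
  · rw [toT5_of_adj_of_not_adj hux hout]; decide

theorem diHom_toT5 (hA : Oriented A) (hc : IsDipathColoring A 2 c) : DiHom A T5 (toT5 A c) := by
  intro x y hxy
  by_cases hin : ∃ u, A u x
  · obtain ⟨u, hux⟩ := hin
    rw [toT5_of_adj_adj hA hc hux hxy]
    by_cases hout : ∃ z, A y z
    · obtain ⟨z, hyz⟩ := hout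
      rw [toT5_of_adj_adj hA hc hxy hyz]
      exact T5_t5CycleVertex (hc.ne_of_adj hA.1 one_le_two hxy)
        (hc.ne_of_adj_adj hA le_rfl hxy hyz).symm (hc.ne_of_adj hA.1 one_le_two hyz).symm
    · rw [toT5_of_adj_of_not_adj hxy hout]
      exact T5_four_right (t5CycleVertex_ne_zero _ _) (t5CycleVertex_ne_four _ _)
  · rw [toT5_of_not_adj hin]
    exact T5_zero_left (toT5_ne_zero hA hc hxy)

end ToT5

theorem stmt11_general {V : Type*} (A : V → V → Prop) (hor : Oriented A)
    (h : ∃ c : V → Fin 3, IsDipathColoring A 2 c) :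
    (∃ φ : V → Fin 5, DiHom A T5 φ) ∧ oChrom A ≤ 5 := by
  obtain ⟨c, hc⟩ := h
  have hφ := diHom_toT5 hor hc
  exact ⟨⟨_, hφ⟩, Nat.sInf_le ⟨T5, oriented_T5, _, hφ⟩⟩

/-- every oriented graph with 2-dipath chromatic number at most 3
admits a homomorphism to `T5`; consequently `χ_o(G) ≤ 5` whenever
`χ_{2-dip}(G) ≤ 3`. -/
theorem stmt11 {V : Type*} [Fintype V] (A : V → V → Prop) (hor : Oriented A)
    (h : ∃ c : V → Fin 3, IsDipathColoring A 2 c) :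
    (∃ φ : V → Fin 5, DiHom A T5 φ) ∧ oChrom A ≤ 5 :=
  stmt11_general A hor h
end

section
/- Let t ≤ k be positive integers. If an oriented graph G has directed girth at least k+1 and admits a k-dipath t-colouring, then G contains no directed path with more than t vertices, and consequently G admits a homomorphism to the transitive tournament T_t. -/
/-!
A path on `t + 1` vertices has length `t ≤ k`, so its vertices would need `t + 1` distinct
colours. Hence every directed path has length less than `t`, and the length of a longest
directed path ending at a vertex is a level in `{0, …, t - 1}`. Along an arc `x → y` a
longest path ending at `x` cannot pass through `y`, since it would close a directed cycle
of length at most `t ≤ k`; so it extends to `y`, and the level strictly increases.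
-/

namespace IsDipath

variable {V : Type*} {A : V → V → Prop} {n : ℕ} {p : ℕ → V}

lemma mono (h : IsDipath A n p) {m : ℕ} (hm : m ≤ n) : IsDipath A m p :=
  ⟨fun i hi => h.1 i (by omega), fun i hi j hj => h.2 i (by omega) j (by omega)⟩

lemma shift (h : IsDipath A n p) {a m : ℕ} (hm : a + m ≤ n) :
    IsDipath A m (fun j => p (a + j)) := by
  refine ⟨fun i hi => ?_, fun i hi j hj hij => ?_⟩
  · simpa only [← Nat.add_assoc] using h.1 (a + i) (by omega)
  · have := h.2 (a + i) (by omega) (a + j) (by omega) hij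
    omega

lemma snoc (h : IsDipath A n p) {y : V} (hy : A (p n) y) (hfresh : ∀ i ≤ n, p i ≠ y) :
    IsDipath A (n + 1) (fun j => if j ≤ n then p j else y) := by
  refine ⟨fun i hi => ?_, fun i hi j hj hij => ?_⟩
  · rcases Nat.lt_or_eq_of_le (Nat.le_of_lt_succ hi) with hi | rfl
    · simpa only [if_pos hi.le, if_pos (Nat.succ_le_of_lt hi)] using h.1 i hi
    · simpa only [le_refl, if_true, Nat.not_succ_le_self, if_false] using hy
  · by_cases hin : i ≤ n <;> by_cases hjn : j ≤ n <;> simp only [hin, hjn, if_true, if_false] at hij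
    · exact h.2 i hin j hjn hij
    · exact absurd hij (hfresh i hin)
    · exact absurd hij.symm (hfresh j hjn)
    · omega

lemma isDicycle_of_arc (h : IsDipath A n p) {i : ℕ} (hi : i ≤ n) (hback : A (p n) (p i)) :
    IsDicycle A (n - i + 1) (fun j => if j = n - i + 1 then p i else p (i + j)) := by
  refine ⟨fun j hj => ?_, by simp, fun a ha b hb hab => ?_⟩
  · dsimp only
    rw [if_neg (by omega)]
    by_cases hlast : j + 1 = n - i + 1
    · rw [if_pos hlast, show i + j = n by omega]
      exact hback
    · rw [if_neg hlast, ← Nat.add_assoc]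
      exact h.1 (i + j) (by omega)
  · dsimp only at hab
    rw [if_neg (by omega), if_neg (by omega)] at hab
    have := h.2 (i + a) (by omega) (i + b) (by omega) hab
    omega

end IsDipath

lemma GirthAtLeast.mono {V : Type*} {A : V → V → Prop} {g h : ℕ} (hg : GirthAtLeast A g)
    (hhg : h ≤ g) : GirthAtLeast A h :=
  fun n hn hnh => hg n hn (by omega)

namespace IsDipathColoring

variable {V : Type*} {A : V → V → Prop} {k t : ℕ} {c : V → Fin t}

lemma apply_ne (hc : IsDipathColoring A k c) {n : ℕ} {p : ℕ → V} (hp : IsDipath A n p)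
    (hnk : n ≤ k) {i j : ℕ} (hij : i < j) (hjn : j ≤ n) : c (p i) ≠ c (p j) := by
  simpa only [Nat.add_zero, Nat.add_sub_cancel' hij.le] using
    hc (j - i) (by omega) (by omega) _ (hp.shift (a := i) (m := j - i) (by omega))

lemma not_isDipath (hc : IsDipathColoring A k c) (htk : t ≤ k) (p : ℕ → V) :
    ¬ IsDipath A t p := by
  intro hp
  obtain ⟨i, j, hne, hij⟩ := Fintype.exists_ne_map_eq_of_card_lt
    (fun i : Fin (t + 1) => c (p i)) (by simp)
  rcases Fin.lt_or_lt_of_ne hne with hlt | hlt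
  · exact hc.apply_ne hp htk hlt (by omega) hij
  · exact hc.apply_ne hp htk hlt (by omega) hij.symm

end IsDipathColoring

/-- The length of a longest directed path ending at `x` (junk value `0` if unbounded). -/
noncomputable def dipathLevel {V : Type*} (A : V → V → Prop) (x : V) : ℕ :=
  sSup {ℓ | ∃ p : ℕ → V, IsDipath A ℓ p ∧ p ℓ = x}

section dipathLevel

variable {V : Type*} {A : V → V → Prop} {N : ℕ}
  (hlen : ∀ n (p : ℕ → V), IsDipath A n p → n < N)
include hlen

lemma bddAbove_dipathLengths (x : V) :
    BddAbove {ℓ | ∃ p : ℕ → V, IsDipath A ℓ p ∧ p ℓ = x} :=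
  ⟨N, fun _ ⟨p, hp, _⟩ => (hlen _ p hp).le⟩

lemma exists_isDipath_dipathLevel (x : V) :
    ∃ p : ℕ → V, IsDipath A (dipathLevel A x) p ∧ p (dipathLevel A x) = x := by
  have hzero : 0 ∈ {ℓ | ∃ p : ℕ → V, IsDipath A ℓ p ∧ p ℓ = x} :=
    ⟨fun _ => x, ⟨fun _ hi => absurd hi (Nat.not_lt_zero _), fun _ _ _ _ _ => by omega⟩, rfl⟩
  exact Nat.sSup_mem ⟨0, hzero⟩ (bddAbove_dipathLengths hlen x)

lemma dipathLevel_lt (x : V) : dipathLevel A x < N := by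
  obtain ⟨p, hp, -⟩ := exists_isDipath_dipathLevel hlen x
  exact hlen _ p hp

lemma dipathLevel_lt_of_adj (hg : GirthAtLeast A (N + 1)) {x y : V} (hxy : A x y) :
    dipathLevel A x < dipathLevel A y := by
  obtain ⟨p, hp, hpx⟩ := exists_isDipath_dipathLevel hlen x
  set m := dipathLevel A x
  have hfresh : ∀ i ≤ m, p i ≠ y := by
    rintro i hi rfl
    exact hg _ (by omega) (by have := dipathLevel_lt hlen x; omega) _
      (hp.isDicycle_of_arc hi (hpx ▸ hxy))
  have hext := hp.snoc (hpx ▸ hxy) hfresh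
  exact Nat.lt_of_succ_le <| le_csSup (bddAbove_dipathLengths hlen y) ⟨_, hext, by simp⟩

theorem exists_diHom_transTour (hg : GirthAtLeast A (N + 1)) :
    ∃ φ : V → Fin N, DiHom A (transTour N) φ :=
  ⟨fun x => ⟨dipathLevel A x, dipathLevel_lt hlen x⟩,
    fun _ _ hxy => dipathLevel_lt_of_adj hlen hg hxy⟩

end dipathLevel

theorem stmt15_general {V : Type*} (A : V → V → Prop) (k t : ℕ)
    (htk : t ≤ k)
    (hg : GirthAtLeast A (k + 1))
    (h : ∃ c : V → Fin t, IsDipathColoring A k c) :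
    (∀ p : ℕ → V, ¬ IsDipath A t p) ∧
    ∃ φ : V → Fin t, DiHom A (transTour t) φ := by
  obtain ⟨c, hc⟩ := h
  have hnone : ∀ p : ℕ → V, ¬ IsDipath A t p := hc.not_isDipath htk
  have hlen : ∀ n (p : ℕ → V), IsDipath A n p → n < t :=
    fun n p hp => Nat.lt_of_not_le fun htn => hnone p (hp.mono htn)
  exact ⟨hnone, exists_diHom_transTour hlen (hg.mono (by omega))⟩

/-- for `t ≤ k`, an oriented graph of directed girth at least
`k+1` with a `k`-dipath `t`-colouring has no directed path on more than `t`
vertices, and hence admits a homomorphism to `T_t`. -/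
theorem stmt15 {V : Type*} (A : V → V → Prop) (k t : ℕ)
    (ht : 0 < t) (htk : t ≤ k) (hor : Oriented A)
    (hg : GirthAtLeast A (k + 1))
    (h : ∃ c : V → Fin t, IsDipathColoring A k c) :
    (∀ p : ℕ → V, ¬ IsDipath A t p) ∧
    ∃ φ : V → Fin t, DiHom A (transTour t) φ :=
  stmt15_general A k t htk hg h
end

section
/- Let k ≥ 3 and t > k. For a simple graph G with acyclic orientation G̃, construct an oriented graph H: for each vertex v, take vertices v_in, v_out, a transitive tournament on t−k+1 vertices with source s_v and sink t_v, a directed path t_v, v'_1, …, v'_{k−2}, v_in of length k−1, and an arc v_out → s_v; for each arc uv of G̃ add the arc u_out → v_in. Then in every k-dipath t-colouring c of H and every vertex v of G, c(v_out) = c(v_in). -/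
/-- The oriented graph `H_{k,t}` built from an (acyclically oriented) graph
with arc relation `E`.  For each vertex `v`, index `0` is `v_out`, indices
`1, …, t-k+1` form a transitive tournament (with source `s_v = 1` and sink
`t_v = t-k+1`), indices `t-k+2, …, t-1` are the path vertices
`v´_1, …, v´_{k-2}`, and index `t` is `v_in`; the path
`t_v, v´_1, …, v´_{k-2}, v_in` has length `k-1`, and there is an arc
`v_out → s_v`.  For each arc `uv` of `E` there is an arc `u_out → v_in`. -/
def Hrel {V : Type*} (E : V → V → Prop) (k t : ℕ) :
    V × Fin (t + 1) → V × Fin (t + 1) → Prop :=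
  fun a b =>
    (a.1 = b.1 ∧
      ((1 ≤ a.2.val ∧ a.2.val < b.2.val ∧ b.2.val ≤ t - k + 1) ∨
       (t - k + 1 ≤ a.2.val ∧ a.2.val ≤ t - 1 ∧ b.2.val = a.2.val + 1) ∨
       (a.2.val = 0 ∧ b.2.val = 1))) ∨
    (E a.1 b.1 ∧ a.2.val = 0 ∧ b.2.val = t)

/-!
The gadget vertices `1, …, t` of `v` (the tournament followed by the path ending at `v_in`) are
pairwise joined by directed paths of length at most `k`: one tournament arc to the sink `t_v`,
then along the path. So they receive `t` distinct colours, that is, all of them. From `v_out`,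
every one of them except `v_in` is reached within `k` steps through `s_v`, so the colour of
`v_out` can only be that of `v_in`. Every arc of `H` increases the index in `0, …, t`, so all
these walks are paths.
-/

open Function Fin.NatCast

def ReachesWithin {V : Type*} (A : V → V → Prop) (k : ℕ) (x y : V) : Prop :=
  ∃ ℓ, 0 < ℓ ∧ ℓ ≤ k ∧ ∃ p : ℕ → V, IsDiwalk A ℓ p ∧ p 0 = x ∧ p ℓ = y

theorem IsDiwalk.isDipath_of_lt {V : Type*} {A : V → V → Prop} {n : ℕ} {p : ℕ → V}
    (f : V → ℕ) (hf : ∀ x y, A x y → f x < f y) (hp : IsDiwalk A n p) : IsDipath A n p := by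
  have hmono : StrictMonoOn (f ∘ p) (Set.Iic n) :=
    strictMonoOn_Iic_of_lt_succ fun m hm => by
      simpa only [comp_apply, Order.succ_eq_add_one] using hf _ _ (hp m hm)
  exact ⟨hp, fun i hi j hj hij => hmono.injOn hi hj (congrArg f hij)⟩

namespace ReachesWithin

variable {V : Type*} {A : V → V → Prop} {m n k : ℕ} {x y z : V}

theorem of_arc (h : A x y) : ReachesWithin A 1 x y :=
  ⟨1, one_pos, le_rfl, fun i => if i = 0 then x else y,
    fun i hi => by simpa [Nat.lt_one_iff.mp hi] using h, rfl, rfl⟩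

theorem mono (h : ReachesWithin A m x y) (hmn : m ≤ n) : ReachesWithin A n x y :=
  let ⟨ℓ, hℓ, hℓm, hp⟩ := h
  ⟨ℓ, hℓ, hℓm.trans hmn, hp⟩

theorem trans (h₁ : ReachesWithin A m x y) (h₂ : ReachesWithin A n y z) :
    ReachesWithin A (m + n) x z := by
  obtain ⟨ℓ₁, hℓ₁, hℓ₁m, p, hp, hp0, hpℓ⟩ := h₁
  obtain ⟨ℓ₂, hℓ₂, hℓ₂n, q, hq, hq0, hqℓ⟩ := h₂
  refine ⟨ℓ₁ + ℓ₂, by omega, by omega, fun i => if i ≤ ℓ₁ then p i else q (i - ℓ₁),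
    fun i hi => ?_, by simp [hp0], by simp [hℓ₂.ne', hqℓ]⟩
  rcases lt_or_ge i ℓ₁ with hi₁ | hi₁
  · simpa [hi₁.le, Nat.succ_le_of_lt hi₁] using hp i hi₁
  · rcases hi₁.eq_or_lt with rfl | hi₁
    · simpa [hpℓ, ← hq0] using hq 0 hℓ₂
    · have hstep := hq (i - ℓ₁) (by omega)
      simp only [hi₁.not_ge, show ¬ i + 1 ≤ ℓ₁ by omega, if_false]
      rwa [show i + 1 - ℓ₁ = i - ℓ₁ + 1 by omega]

theorem map {W : Type*} {B : W → W → Prop} {φ : V → W} (hφ : DiHom A B φ)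
    (h : ReachesWithin A k x y) : ReachesWithin B k (φ x) (φ y) :=
  let ⟨ℓ, hℓ, hℓk, p, hp, hp0, hpℓ⟩ := h
  ⟨ℓ, hℓ, hℓk, φ ∘ p, fun i hi => hφ _ _ (hp i hi), by simp [hp0], by simp [hpℓ]⟩

end ReachesWithin

theorem IsDipathColoring.ne_of_reachesWithin {V : Type*} {A : V → V → Prop} {k t : ℕ}
    {c : V → Fin t} (hc : IsDipathColoring A k c) (f : V → ℕ) (hf : ∀ x y, A x y → f x < f y)
    {x y : V} (h : ReachesWithin A k x y) : c x ≠ c y := by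
  obtain ⟨ℓ, hℓ, hℓk, p, hp, rfl, rfl⟩ := h
  exact hc ℓ hℓ hℓk p (hp.isDipath_of_lt f hf)

/-- The arcs of `Hrel E k t` inside the gadget of a single vertex, on the indices `0, …, t`. -/
def gadgetArc (k t : ℕ) (a b : ℕ) : Prop :=
  (1 ≤ a ∧ a < b ∧ b ≤ t - k + 1) ∨ (t - k + 1 ≤ a ∧ a ≤ t - 1 ∧ b = a + 1) ∨ (a = 0 ∧ b = 1)

section Gadget

variable {k t : ℕ}

theorem reachesWithin_gadgetArc_add {a j : ℕ} (ha : t - k + 1 ≤ a) (hj : 0 < j)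
    (hajt : a + j ≤ t) : ReachesWithin (gadgetArc k t) j a (a + j) := by
  induction j, hj using Nat.le_induction with
  | base => exact .of_arc (by unfold gadgetArc; omega)
  | succ j _ ih =>
    exact (ih (by omega)).trans (.of_arc (by unfold gadgetArc; omega))

/-- One tournament arc to the sink `t - k + 1`, then along the path. -/
theorem reachesWithin_gadgetArc_of_pos {a b : ℕ} (ha : 1 ≤ a) (hab : a < b) (hbt : b ≤ t) :
    ReachesWithin (gadgetArc k t) (1 + (b - (t - k + 1))) a b := by
  rcases le_or_gt b (t - k + 1) with hb | hb
  · exact (ReachesWithin.of_arc (by unfold gadgetArc; omega)).mono (Nat.le_add_right 1 _)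
  rcases le_or_gt (t - k + 1) a with ha' | ha'
  · have h := reachesWithin_gadgetArc_add (k := k) ha' (Nat.sub_pos_of_lt hab) (by omega)
    rw [Nat.add_sub_cancel' hab.le] at h
    exact h.mono (by omega)
  · have h := (ReachesWithin.of_arc (A := gadgetArc k t) (x := a) (y := t - k + 1)
      (by unfold gadgetArc; omega)).trans
      (reachesWithin_gadgetArc_add le_rfl (Nat.sub_pos_of_lt hb) (by omega))
    rwa [Nat.add_sub_cancel' hb.le] at h

theorem reachesWithin_gadgetArc (hk : 2 ≤ k) (ht : k < t) {a b : ℕ} (hab : a < b) (hbt : b ≤ t)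
    (hout_in : ¬(a = 0 ∧ b = t)) : ReachesWithin (gadgetArc k t) k a b := by
  rcases Nat.eq_zero_or_pos a with rfl | ha
  · have h01 : ReachesWithin (gadgetArc k t) 1 0 1 := .of_arc (by unfold gadgetArc; omega)
    rcases (Nat.succ_le_of_lt hab).eq_or_lt with rfl | hb
    · exact h01.mono (by omega)
    · exact (h01.trans (reachesWithin_gadgetArc_of_pos le_rfl hb hbt)).mono (by omega)
  · exact (reachesWithin_gadgetArc_of_pos ha hab hbt).mono (by omega)

theorem diHom_gadgetArc_hrel {V : Type*} (E : V → V → Prop) (hk : 0 < k) (hkt : k ≤ t)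
    (v : V) :
    DiHom (gadgetArc k t) (Hrel E k t) fun i : ℕ => (v, (i : Fin (t + 1))) := by
  intro a b h
  unfold gadgetArc at h
  have ha : a ≤ t := by omega
  have hb : b ≤ t := by omega
  refine Or.inl ⟨rfl, ?_⟩
  simpa only [Fin.val_cast_of_lt (Nat.lt_succ_of_le ha), Fin.val_cast_of_lt (Nat.lt_succ_of_le hb)]
    using h

theorem Hrel.val_lt {V : Type*} {E : V → V → Prop} (ht : 0 < t) {x y : V × Fin (t + 1)}
    (h : Hrel E k t x y) : x.2.val < y.2.val := by
  unfold Hrel at h; omega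

theorem IsDipathColoring.gadget_ne {V : Type*} {E : V → V → Prop} {c : V × Fin (t + 1) → Fin t}
    (hc : IsDipathColoring (Hrel E k t) k c) (hk : 2 ≤ k) (ht : k < t) (v : V) {a b : ℕ}
    (hab : a < b) (hbt : b ≤ t) (hout_in : ¬(a = 0 ∧ b = t)) :
    c (v, (a : Fin (t + 1))) ≠ c (v, (b : Fin (t + 1))) := by
  have h := (reachesWithin_gadgetArc hk ht hab hbt hout_in).map
    (diHom_gadgetArc_hrel E (by omega) ht.le v)
  exact hc.ne_of_reachesWithin (fun x => x.2.val) (fun _ _ h => h.val_lt (by omega)) h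

end Gadget

theorem stmt16_general {V : Type*} (k t : ℕ) (hk : 3 ≤ k) (ht : k < t)
    (E : V → V → Prop)
    (c : V × Fin (t + 1) → Fin t)
    (hc : IsDipathColoring (Hrel E k t) k c) :
    ∀ v : V, c (v, 0) = c (v, Fin.last t) := by
  intro v
  let g : Fin t → Fin t := fun i => c (v, ((i.val + 1 : ℕ) : Fin (t + 1)))
  have hg : Injective g := Injective.of_lt_imp_ne fun i j hij =>
    hc.gadget_ne (by omega) ht v (Nat.succ_lt_succ hij) j.isLt (by omega)
  obtain ⟨i, hi⟩ := Finite.injective_iff_surjective.mp hg (c (v, 0))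
  have hit : i.val + 1 = t := by
    by_contra hne
    exact hc.gadget_ne (a := 0) (by omega) ht v (Nat.succ_pos _) i.isLt (by omega)
      (by simpa [g] using hi.symm)
  rw [← hi]
  simp only [g, hit, Fin.natCast_eq_last]

/-- in every `k`-dipath `t`-colouring `c` of `H_{k,t}`
(`t > k ≥ 3`), for every vertex `v`, `c(v_out) = c(v_in)`. -/
theorem stmt16 {V : Type*} (k t : ℕ) (hk : 3 ≤ k) (ht : k < t)
    (E : V → V → Prop) (hE : Acyclic E)
    (c : V × Fin (t + 1) → Fin t)
    (hc : IsDipathColoring (Hrel E k t) k c) :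
    ∀ v : V, c (v, 0) = c (v, Fin.last t) :=
  stmt16_general k t hk ht E c hc
end
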